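/- arXiv:1105.2931 — 3 statements merged into one kernel-verified Lean document; each statement's English description precedes it below -/
import Mathlib

section
/- Let A : ℝ^n → ℝ^k be a surjective linear map and let B^n be the open unit ball of ℝ^n. Then the k-dimensional volume of A(B^n) equals ω_k · |det(A restricted to (ker A)^⊥)|, where ω_k is the volume of the unit ball in ℝ^k. -/
/-! Since `A` kills `ker A`, `A(Bⁿ)` is the image of the unit ball of `(ker A)ᗮ` under the
restriction of `A`. The orthonormal basis `b` identifies `(ker A)ᗮ` isometrically with `ℝᵏ`, so
`A(Bⁿ)` is the image of the unit ball of `ℝᵏ` under an endomorphism whose determinant is the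
matrix determinant in the statement, and Lebesgue measure scales by `|det|` under linear maps. -/

open MeasureTheory Metric

theorem LinearMap.image_ball_eq_image_domRestrict_orthogonal_ker {𝕜 E F : Type*} [RCLike 𝕜]
    [NormedAddCommGroup E] [InnerProductSpace 𝕜 E] [AddCommGroup F] [Module 𝕜 F]
    (A : E →ₗ[𝕜] F) [(LinearMap.ker A).HasOrthogonalProjection] (r : ℝ) :
    A '' ball 0 r = A.domRestrict (LinearMap.ker A)ᗮ '' ball 0 r := by
  apply Set.Subset.antisymm
  · rintro _ ⟨x, hx, rfl⟩
    refine ⟨(LinearMap.ker A)ᗮ.orthogonalProjectionOnto x, ?_, ?_⟩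
    · rw [mem_ball_zero_iff] at hx ⊢
      exact (Submodule.norm_orthogonalProjectionOnto_apply_le _ x).trans_lt hx
    · have hker : A ((LinearMap.ker A).starProjection x) = 0 :=
        LinearMap.mem_ker.mp (Submodule.starProjection_apply_mem _ x)
      conv_rhs =>
        rw [← Submodule.starProjection_add_starProjection_orthogonal (K := LinearMap.ker A) x]
      rw [map_add, hker, zero_add]
      rfl
  · rintro _ ⟨x, hx, rfl⟩
    exact ⟨x, by simpa using hx, rfl⟩

theorem LinearMap.det_comp_basis_equiv {ι R M N : Type*} [Fintype ι] [DecidableEq ι] [CommRing R]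
    [AddCommGroup M] [Module R M] [AddCommGroup N] [Module R N]
    (f : M →ₗ[R] N) (b : Module.Basis ι R M) (c : Module.Basis ι R N) :
    LinearMap.det (f ∘ₗ (c.equiv b (Equiv.refl ι)).toLinearMap) =
      (LinearMap.toMatrix b c f).det := by
  rw [← LinearMap.det_toMatrix c, LinearMap.toMatrix_comp c b c, LinearMap.toMatrix_basis_equiv,
    Matrix.mul_one]

theorem stmt1_general (n k : ℕ)
    (A : EuclideanSpace ℝ (Fin n) →ₗ[ℝ] EuclideanSpace ℝ (Fin k))
    (b : OrthonormalBasis (Fin k) ℝ ((LinearMap.ker A)ᗮ : Submodule ℝ (EuclideanSpace ℝ (Fin n)))) :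
    volume (A '' Metric.ball (0 : EuclideanSpace ℝ (Fin n)) 1) =
      volume (Metric.ball (0 : EuclideanSpace ℝ (Fin k)) 1) *
        ENNReal.ofReal
          |Matrix.det (LinearMap.toMatrix b.toBasis (EuclideanSpace.basisFun (Fin k) ℝ).toBasis
              (A.domRestrict (LinearMap.ker A)ᗮ))| := by
  set std := (EuclideanSpace.basisFun (Fin k) ℝ).toBasis
  have hrepr : (std.equiv b.toBasis (Equiv.refl _)).toLinearMap = b.repr.symm.toLinearMap :=
    std.ext fun i => by
      rw [LinearEquiv.coe_coe, Module.Basis.equiv_apply]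
      simp [std]
  have hball : b.repr.symm '' ball 0 1 = ball 0 1 := by
    rw [LinearIsometryEquiv.image_ball, map_zero]
  rw [A.image_ball_eq_image_domRestrict_orthogonal_ker, ← hball, Set.image_image,
    ← LinearMap.det_comp_basis_equiv _ b.toBasis std, hrepr, mul_comm]
  exact Measure.addHaar_image_linearMap _ (A.domRestrict _ ∘ₗ b.repr.symm.toLinearMap) _

/-- For a surjective linear map `A : ℝⁿ → ℝᵏ`, the `k`-dimensional volume of the
image of the open unit ball equals `ω_k · |det(A|_{(ker A)ᗮ})|`, the determinant being computed
with respect to an orthonormal basis of `(ker A)ᗮ` and the standard orthonormal basis of `ℝᵏ`,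
and `ω_k` being the volume of the unit ball of `ℝᵏ`. -/
theorem stmt1 (n k : ℕ)
    (A : EuclideanSpace ℝ (Fin n) →ₗ[ℝ] EuclideanSpace ℝ (Fin k))
    (hA : Function.Surjective A)
    (b : OrthonormalBasis (Fin k) ℝ ((LinearMap.ker A)ᗮ : Submodule ℝ (EuclideanSpace ℝ (Fin n)))) :
    volume (A '' Metric.ball (0 : EuclideanSpace ℝ (Fin n)) 1) =
      volume (Metric.ball (0 : EuclideanSpace ℝ (Fin k)) 1) *
        ENNReal.ofReal
          |Matrix.det (LinearMap.toMatrix b.toBasis (EuclideanSpace.basisFun (Fin k) ℝ).toBasis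
              (A.domRestrict (LinearMap.ker A)ᗮ))| :=
  stmt1_general n k A b
end

section
/- Let A : ℝ^n → ℝ^k be a surjective linear map. Then the function W ↦ |det(A|_W)| on the Grassmannian of k-dimensional subspaces of ℝ^n attains its maximum at W = range(A*) = (ker A)^⊥, i.e., for every k-dimensional subspace W of ℝ^n, |det(A|_W)| ≤ |det(A|_{(ker A)^⊥})|. -/
/-!
Since `A` kills `ker A`, its restriction to `W` factors as its restriction to `(ker A)ᗮ` after
the orthogonal projection `W → (ker A)ᗮ`. The two spaces have the same dimension, so volume factors
(`LinearMap.normDet`) multiply along this factorization, and the projection, being a contraction,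
has all singular values at most `1`, hence volume factor at most `1`.
-/

open Module

namespace LinearMap

variable {𝕜 E F : Type*} [RCLike 𝕜]
  [NormedAddCommGroup E] [InnerProductSpace 𝕜 E] [FiniteDimensional 𝕜 E]
  [NormedAddCommGroup F] [InnerProductSpace 𝕜 F]

theorem singularValues_le_of_norm_apply_le [FiniteDimensional 𝕜 F] {T : E →ₗ[𝕜] F} {C : ℝ}
    (hC : 0 ≤ C) (hT : ∀ x, ‖T x‖ ≤ C * ‖x‖) (i : ℕ) : T.singularValues i ≤ C := by
  rcases le_or_gt (finrank 𝕜 E) i with hi | hi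
  · rwa [T.singularValues_of_finrank_le hi]
  obtain ⟨v, hv⟩ := (T.hasEigenvalue_adjoint_comp_self_sq_singularValues hi).exists_hasEigenvector
  have hv0 : 0 < ‖v‖ := norm_pos_iff.mpr hv.2
  have hrayleigh : T.singularValues i ^ 2 * ‖v‖ ^ 2 = ‖T v‖ ^ 2 := by
    have := congrArg (fun w => RCLike.re (inner 𝕜 v w)) hv.apply_eq_smul
    simp only [comp_apply, adjoint_inner_right, inner_smul_right, inner_self_eq_norm_sq_to_K,
      ← RCLike.ofReal_pow, ← RCLike.ofReal_mul, RCLike.ofReal_re] at this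
    exact this.symm
  have hsq : T.singularValues i ^ 2 ≤ C ^ 2 := by
    refine le_of_mul_le_mul_right ?_ (pow_pos hv0 2)
    rw [hrayleigh, ← mul_pow]
    exact pow_le_pow_left₀ (norm_nonneg _) (hT v) 2
  exact (pow_le_pow_iff_left₀ (T.singularValues_nonneg i) hC two_ne_zero).mp hsq

theorem normDet_le_of_norm_apply_le [FiniteDimensional 𝕜 F] {f : E →ₗ[𝕜] F} {C : ℝ}
    (hC : 0 ≤ C) (hf : ∀ x, ‖f x‖ ≤ C * ‖x‖) :
    f.normDet ≤ C ^ finrank 𝕜 E := by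
  rw [normDet_eq_prod_singularValues]
  calc ∏ i ∈ Finset.range (finrank 𝕜 E), f.singularValues i
      ≤ ∏ _i ∈ Finset.range (finrank 𝕜 E), C :=
        Finset.prod_le_prod (fun i _ => f.singularValues_nonneg i)
          (fun i _ => singularValues_le_of_norm_apply_le hC hf i)
    _ = C ^ finrank 𝕜 E := by rw [Finset.prod_const, Finset.card_range]

theorem apply_orthogonalProjectionOnto_orthogonal_ker (A : E →ₗ[𝕜] F) (x : E) :
    A ((ker A)ᗮ.orthogonalProjectionOnto x) = A x := by
  have hx : x - (ker A)ᗮ.starProjection x ∈ ker A := by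
    simpa only [Submodule.orthogonal_orthogonal] using
      Submodule.sub_starProjection_mem_orthogonal (K := (ker A)ᗮ) x
  rw [mem_ker, map_sub, sub_eq_zero, Submodule.starProjection_apply] at hx
  exact hx.symm

theorem domRestrict_eq_domRestrict_orthogonal_ker_comp (A : E →ₗ[𝕜] F) (W : Submodule 𝕜 E) :
    A.domRestrict W =
      A.domRestrict (ker A)ᗮ ∘ₗ (ker A)ᗮ.orthogonalProjectionOnto.toLinearMap ∘ₗ W.subtype :=
  ext fun w => (A.apply_orthogonalProjectionOnto_orthogonal_ker w).symm

theorem normDet_domRestrict_le_normDet_domRestrict_orthogonal_ker (A : E →ₗ[𝕜] F)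
    (W : Submodule 𝕜 E) (hW : finrank 𝕜 W = finrank 𝕜 (ker A)ᗮ) :
    (A.domRestrict W).normDet ≤ (A.domRestrict (ker A)ᗮ).normDet := by
  have hproj : ((ker A)ᗮ.orthogonalProjectionOnto.toLinearMap ∘ₗ W.subtype).normDet ≤ 1 := by
    simpa using normDet_le_of_norm_apply_le zero_le_one fun w : W => by
      simpa using (ker A)ᗮ.norm_orthogonalProjectionOnto_apply_le w
  rw [domRestrict_eq_domRestrict_orthogonal_ker_comp, normDet_comp_of_finrank_eq _ _ hW]
  exact mul_le_of_le_one_right (normDet_nonneg _) hproj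

end LinearMap

theorem stmt2_general (n k : ℕ)
    (A : EuclideanSpace ℝ (Fin n) →ₗ[ℝ] EuclideanSpace ℝ (Fin k))
    (bK : OrthonormalBasis (Fin k) ℝ ((LinearMap.ker A)ᗮ : Submodule ℝ (EuclideanSpace ℝ (Fin n))))
    (W : Submodule ℝ (EuclideanSpace ℝ (Fin n)))
    (bW : OrthonormalBasis (Fin k) ℝ W) :
    LinearMap.range (LinearMap.adjoint A) = (LinearMap.ker A)ᗮ ∧
    |Matrix.det (LinearMap.toMatrix bW.toBasis (EuclideanSpace.basisFun (Fin k) ℝ).toBasis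
        (A.domRestrict W))| ≤
      |Matrix.det (LinearMap.toMatrix bK.toBasis (EuclideanSpace.basisFun (Fin k) ℝ).toBasis
        (A.domRestrict (LinearMap.ker A)ᗮ))| := by
  refine ⟨A.orthogonal_ker.symm, ?_⟩
  have hrank : finrank ℝ W = finrank ℝ (LinearMap.ker A)ᗮ := by
    rw [finrank_eq_card_basis bW.toBasis, finrank_eq_card_basis bK.toBasis]
  rw [← Real.norm_eq_abs, ← Real.norm_eq_abs, ← LinearMap.normDet_eq_norm_det_toMatrix,
    ← LinearMap.normDet_eq_norm_det_toMatrix]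
  exact A.normDet_domRestrict_le_normDet_domRestrict_orthogonal_ker W hrank

/-- For a surjective linear map `A : ℝⁿ → ℝᵏ`, the function
`W ↦ |det(A|_W)|` on `k`-dimensional subspaces of `ℝⁿ` (determinants with respect to
orthonormal bases) attains its maximum at `W = (ker A)ᗮ = range A*`. -/
theorem stmt2 (n k : ℕ)
    (A : EuclideanSpace ℝ (Fin n) →ₗ[ℝ] EuclideanSpace ℝ (Fin k))
    (hA : Function.Surjective A)
    (bK : OrthonormalBasis (Fin k) ℝ ((LinearMap.ker A)ᗮ : Submodule ℝ (EuclideanSpace ℝ (Fin n))))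
    (W : Submodule ℝ (EuclideanSpace ℝ (Fin n))) (hW : Module.finrank ℝ W = k)
    (bW : OrthonormalBasis (Fin k) ℝ W) :
    LinearMap.range (LinearMap.adjoint A) = (LinearMap.ker A)ᗮ ∧
    |Matrix.det (LinearMap.toMatrix bW.toBasis (EuclideanSpace.basisFun (Fin k) ℝ).toBasis
        (A.domRestrict W))| ≤
      |Matrix.det (LinearMap.toMatrix bK.toBasis (EuclideanSpace.basisFun (Fin k) ℝ).toBasis
        (A.domRestrict (LinearMap.ker A)ᗮ))| :=
  stmt2_general n k A bK W bW
end

section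
/- (Equality case of linear nonsqueezing) In the setting of the linear middle-dimensional nonsqueezing theorem, vol_{2k}(P Φ(B^{2n}(R))) = ω_{2k} R^{2k} holds if and only if the subspace Φ*V is a complex subspace of ℝ^{2n} ≅ ℂ^n. -/
open MeasureTheory

/-- The standard symplectic form `Ω = Σ dp_j ∧ dq_j` on `ℝ²ⁿ ≅ ℂⁿ`, namely the imaginary part
of the Hermitian inner product. -/
noncomputable def stdSymp (n : ℕ) (u v : EuclideanSpace ℂ (Fin n)) : ℝ :=
  (inner ℂ u v : ℂ).im

/-!
Write `J` for multiplication by `i`, so that `Ω(u, v) = ⟪J u, v⟫` and `Φ* J Φ = J`. With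
`M = Φ* ∘ ι_V ∘ e⁻¹ : ℝ²ᵏ → ℂⁿ`, the projected ball is `M* (B(R))`. Factor `M = Q C` with `Q` an
isometric embedding onto `range M = Φ* V` and `C` square; since `Q*` maps `B(R)` onto `B(R)`, the
volume of `M* (B(R))` is `|det C|` times that of `B(R)`.

As the transpose of a symplectic map is symplectic, `M* J M = e J e⁻¹` is orthogonal, while
`S = Q* J Q` is a contraction with `M* J M = C* S C`. Hence `|det C|² |det S| = 1` with
`|det S| ≤ 1`, and `|det C| = 1` iff `S` is an isometry, i.e. iff `J` preserves `range Q = Φ* V`.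
-/

theorem mul_mul_eq_of_mul_mul_eq {R : Type*} [Ring R] [IsDedekindFiniteMonoid R] {a f J : R}
    (hJ : J * J = -1) (h : a * J * f = J) : f * J * a = J := by
  have hleft : -(J * a * J) * f = 1 := by
    rw [neg_mul, mul_assoc, mul_assoc, ← mul_assoc a, h, hJ, neg_neg]
  calc f * J * a = (f * -(J * a * J)) * J := by
        simp only [neg_mul, mul_assoc, hJ, mul_neg, mul_one, neg_neg]
    _ = J := by rw [mul_eq_one_comm.1 hleft, one_mul]

namespace LinearMap

variable {E F : Type*} [NormedAddCommGroup E] [InnerProductSpace ℝ E]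
  [NormedAddCommGroup F] [InnerProductSpace ℝ F] [FiniteDimensional ℝ F]

theorem det_adjoint (f : F →ₗ[ℝ] F) : (adjoint f).det = f.det := by
  let b := stdOrthonormalBasis ℝ F
  rw [← det_toMatrix b.toBasis, ← det_toMatrix b.toBasis, toMatrix_adjoint,
    Matrix.det_conjTranspose, star_trivial]

theorem IsSymmetric.eq_id_of_det_eq_one {A : F →ₗ[ℝ] F} (hA : A.IsSymmetric)
    (h0 : ∀ x, 0 ≤ inner ℝ (A x) x) (h1 : ∀ x, inner ℝ (A x) x ≤ ‖x‖ ^ 2) (hdet : A.det = 1) :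
    A = .id := by
  let b := hA.eigenvectorBasis rfl
  have hAb : ∀ i, A (b i) = hA.eigenvalues rfl i • b i := fun i ↦ by
    exact_mod_cast hA.apply_eigenvectorBasis rfl i
  have hμ : ∀ i, hA.eigenvalues rfl i = inner ℝ (A (b i)) (b i) := fun i ↦ by
    rw [hAb, real_inner_smul_left, real_inner_self_eq_norm_sq, b.norm_eq_one, one_pow, mul_one]
  have hμ0 : ∀ i, 0 ≤ hA.eigenvalues rfl i := fun i ↦ hμ i ▸ h0 _
  have hμ1 : ∀ i, hA.eigenvalues rfl i ≤ 1 := fun i ↦ by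
    simpa only [hμ, b.norm_eq_one, one_pow] using h1 (b i)
  have hprod : ∏ i, hA.eigenvalues rfl i = 1 := by
    simpa [hA.det_eq_prod_eigenvalues rfl] using hdet
  have hμeq : ∀ i, hA.eigenvalues rfl i = 1 := fun i ↦ by
    refine le_antisymm (hμ1 i) ?_
    calc 1 = hA.eigenvalues rfl i * ∏ j ∈ Finset.univ.erase i, hA.eigenvalues rfl j := by
          rw [Finset.mul_prod_erase _ _ (Finset.mem_univ i), hprod]
      _ ≤ hA.eigenvalues rfl i := mul_le_of_le_one_right (hμ0 i)
          (Finset.prod_le_one (fun j _ ↦ hμ0 j) (fun j _ ↦ hμ1 j))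
  refine b.toBasis.ext fun i ↦ ?_
  rw [OrthonormalBasis.coe_toBasis, hAb, hμeq, one_smul, id_apply]

theorem exists_linearIsometry_range_eq {M : F →ₗ[ℝ] E} (hM : Function.Injective M) :
    ∃ Q : F →ₗᵢ[ℝ] E, range Q.toLinearMap = range M := by
  let W := range M
  let U : F ≃ₗᵢ[ℝ] W := (stdOrthonormalBasis ℝ F).equiv (stdOrthonormalBasis ℝ W)
    (finCongr (finrank_range_of_inj hM).symm)
  refine ⟨W.subtypeₗᵢ.comp U.toLinearIsometry, ?_⟩
  ext y
  exact ⟨fun ⟨x, hx⟩ ↦ hx ▸ (U x).2, fun hy ↦ ⟨U.symm ⟨y, hy⟩, by simp⟩⟩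

variable [FiniteDimensional ℝ E]

theorem adjoint_comp_self_of_norm_map {f : F →ₗ[ℝ] E} (hf : ∀ x, ‖f x‖ = ‖x‖) :
    adjoint f ∘ₗ f = .id := by
  ext x
  refine ext_inner_right ℝ fun y ↦ ?_
  rw [comp_apply, adjoint_inner_left, id_apply, (norm_map_iff_inner_map_map f).1 hf]

theorem abs_det_eq_one_of_norm_map {f : F →ₗ[ℝ] F} (hf : ∀ x, ‖f x‖ = ‖x‖) : |f.det| = 1 := by
  have h := congrArg LinearMap.det (adjoint_comp_self_of_norm_map hf)
  rw [det_comp, det_adjoint, det_id, ← sq, ← sq_abs] at h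
  exact (pow_eq_one_iff_of_nonneg (abs_nonneg _) two_ne_zero).1 h

theorem abs_det_eq_one_iff_norm_map {f : F →ₗ[ℝ] F} (hf : ∀ x, ‖f x‖ ≤ ‖x‖) :
    |f.det| = 1 ↔ ∀ x, ‖f x‖ = ‖x‖ := by
  refine ⟨fun hdet x ↦ ?_, abs_det_eq_one_of_norm_map⟩
  have hinner : ∀ x, inner ℝ ((adjoint f ∘ₗ f) x) x = ‖f x‖ ^ 2 := fun x ↦ by
    rw [comp_apply, adjoint_inner_left, real_inner_self_eq_norm_sq]
  have hid := (isSymmetric_adjoint_comp_self f).eq_id_of_det_eq_one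
    (fun x ↦ hinner x ▸ sq_nonneg _)
    (fun x ↦ hinner x ▸ pow_le_pow_left₀ (norm_nonneg _) (hf x) 2)
    (by rw [det_comp, det_adjoint, ← sq, ← sq_abs, hdet, one_pow])
  have := hinner x
  rw [hid, id_apply, real_inner_self_eq_norm_sq] at this
  exact ((pow_left_inj₀ (norm_nonneg _) (norm_nonneg _) two_ne_zero).1 this).symm

theorem sq_norm_adjoint_add_sq_norm_sub {f : F →ₗ[ℝ] E} (hf : ∀ x, ‖f x‖ = ‖x‖) (y : E) :
    ‖adjoint f y‖ ^ 2 + ‖y - f (adjoint f y)‖ ^ 2 = ‖y‖ ^ 2 := by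
  rw [norm_sub_sq_real, hf, ← adjoint_inner_left, real_inner_self_eq_norm_sq]
  ring

theorem norm_adjoint_apply_le {f : F →ₗ[ℝ] E} (hf : ∀ x, ‖f x‖ = ‖x‖) (y : E) :
    ‖adjoint f y‖ ≤ ‖y‖ := by
  refine (pow_le_pow_iff_left₀ (norm_nonneg _) (norm_nonneg _) two_ne_zero).1 ?_
  linarith [sq_norm_adjoint_add_sq_norm_sub hf y, sq_nonneg ‖y - f (adjoint f y)‖]

theorem norm_adjoint_apply_eq_iff {f : F →ₗ[ℝ] E} (hf : ∀ x, ‖f x‖ = ‖x‖) (y : E) :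
    ‖adjoint f y‖ = ‖y‖ ↔ y ∈ range f := by
  constructor
  · intro h
    have := sq_norm_adjoint_add_sq_norm_sub hf y
    rw [h, add_eq_left, sq_eq_zero_iff, norm_eq_zero, sub_eq_zero] at this
    exact ⟨_, this.symm⟩
  · rintro ⟨x, rfl⟩
    rw [← comp_apply (adjoint f), adjoint_comp_self_of_norm_map hf, id_apply, hf]

theorem image_adjoint_ball {f : F →ₗ[ℝ] E} (hf : ∀ x, ‖f x‖ = ‖x‖) (R : ℝ) :
    adjoint f '' Metric.ball 0 R = Metric.ball 0 R := by
  ext x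
  constructor
  · rintro ⟨y, hy, rfl⟩
    rw [mem_ball_zero_iff] at hy ⊢
    exact (norm_adjoint_apply_le hf y).trans_lt hy
  · intro hx
    refine ⟨f x, by rwa [mem_ball_zero_iff, hf, ← mem_ball_zero_iff], ?_⟩
    rw [← comp_apply (adjoint f), adjoint_comp_self_of_norm_map hf, id_apply]

theorem abs_det_eq_one_iff_forall_mem_range {Q : F →ₗ[ℝ] E} (hQ : ∀ x, ‖Q x‖ = ‖x‖)
    {J : E →ₗ[ℝ] E} (hJ : ∀ y, ‖J y‖ = ‖y‖) {C : F →ₗ[ℝ] F}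
    (hC : ∀ x, ‖adjoint C (adjoint Q (J (Q (C x))))‖ = ‖x‖) :
    |C.det| = 1 ↔ ∀ y ∈ range Q, J y ∈ range Q := by
  let S := adjoint Q ∘ₗ J ∘ₗ Q
  have hS : ∀ x, ‖S x‖ ≤ ‖x‖ := fun x ↦
    (norm_adjoint_apply_le hQ (J (Q x))).trans_eq (by rw [hJ, hQ])
  have hdet : |C.det| ^ 2 * |S.det| = 1 := by
    have h := abs_det_eq_one_of_norm_map (f := adjoint C ∘ₗ S ∘ₗ C) hC
    rw [det_comp, det_comp, det_adjoint, abs_mul, abs_mul] at h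
    linear_combination h
  have hSiso : (∀ x, ‖S x‖ = ‖x‖) ↔ ∀ y ∈ range Q, J y ∈ range Q := by
    rw [show (∀ y ∈ range Q, J y ∈ range Q) ↔ ∀ x, J (Q x) ∈ range Q from
      ⟨fun h x ↦ h _ ⟨x, rfl⟩, fun h _ ⟨x, hx⟩ ↦ hx ▸ h x⟩]
    exact forall_congr' fun x ↦ by rw [← norm_adjoint_apply_eq_iff hQ, hJ, hQ]; rfl
  rw [← hSiso, ← abs_det_eq_one_iff_norm_map hS]
  constructor
  · intro hC1
    simpa [hC1] using hdet
  · intro hS1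
    rw [hS1, mul_one] at hdet
    exact (pow_eq_one_iff_of_nonneg (abs_nonneg _) two_ne_zero).1 hdet

theorem addHaar_image_adjoint_ball_eq_iff [MeasurableSpace F] [BorelSpace F] (μ : Measure F)
    [μ.IsAddHaarMeasure] {M : F →ₗ[ℝ] E} {J : E →ₗ[ℝ] E} (hJ : ∀ y, ‖J y‖ = ‖y‖)
    (hM : ∀ x, ‖adjoint M (J (M x))‖ = ‖x‖) {R : ℝ} (hR : 0 < R) :
    μ (adjoint M '' Metric.ball 0 R) = μ (Metric.ball 0 R) ↔ ∀ y ∈ range M, J y ∈ range M := by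
  have hMinj : Function.Injective M := fun x x' h ↦ by
    rw [← sub_eq_zero, ← norm_eq_zero, ← hM, map_sub, h, sub_self, map_zero, map_zero, norm_zero]
  obtain ⟨Q, hQ⟩ := exists_linearIsometry_range_eq hMinj
  set C := adjoint Q.toLinearMap ∘ₗ M
  have hQC : Q.toLinearMap ∘ₗ C = M := by
    ext x
    obtain ⟨z, hz⟩ : M x ∈ range Q.toLinearMap := hQ ▸ mem_range_self M x
    rw [comp_apply, comp_apply, ← hz, ← comp_apply (adjoint _),
      adjoint_comp_self_of_norm_map Q.norm_map, id_apply]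
  rw [← hQC, adjoint_comp] at hM
  rw [← hQC, adjoint_comp, coe_comp, Set.image_comp, image_adjoint_ball Q.norm_map,
    Measure.addHaar_image_linearMap, det_adjoint,
    ENNReal.mul_eq_right (Metric.measure_ball_pos μ 0 hR).ne' measure_ball_lt_top.ne,
    ENNReal.ofReal_eq_one, hQC, ← hQ]
  exact abs_det_eq_one_iff_forall_mem_range Q.norm_map hJ hM

theorem adjoint_comp_subtype_comp_symm {G : Type*} [NormedAddCommGroup G] [InnerProductSpace ℝ G]
    [FiniteDimensional ℝ G] (f : E →ₗ[ℝ] G) (V : Submodule ℝ E) (e : V ≃ₗᵢ[ℝ] F) :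
    adjoint (f ∘ₗ V.subtype ∘ₗ e.symm.toLinearMap) =
      e.toLinearMap ∘ₗ V.orthogonalProjectionOnto.toLinearMap ∘ₗ adjoint f := by
  symm
  refine (eq_adjoint_iff _ _).2 fun x y ↦ ?_
  simp only [comp_apply, LinearEquiv.coe_coe, LinearIsometryEquiv.coe_toLinearEquiv,
    ContinuousLinearMap.coe_coe, Submodule.subtype_apply]
  rw [LinearIsometryEquiv.inner_map_eq_flip (𝕜 := ℝ) (E := V) e,
    Submodule.inner_orthogonalProjectionOnto_eq_of_mem_right, adjoint_inner_left]

theorem addHaar_image_orthogonalProjectionOnto_image_ball_eq_iff [MeasurableSpace F]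
    [BorelSpace F] (μ : Measure F) [μ.IsAddHaarMeasure] {J : E →ₗ[ℝ] E}
    (hJ : ∀ y, ‖J y‖ = ‖y‖) {Φ : E →ₗ[ℝ] E} (hΦ : Φ * J * adjoint Φ = J) {V : Submodule ℝ E}
    (hV : ∀ v ∈ V, J v ∈ V) (e : V ≃ₗᵢ[ℝ] F) {R : ℝ} (hR : 0 < R) :
    μ (e '' (V.orthogonalProjectionOnto '' (Φ '' Metric.ball 0 R))) = μ (Metric.ball 0 R) ↔
      ∀ v ∈ V.map (adjoint Φ), J v ∈ V.map (adjoint Φ) := by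
  let M := adjoint Φ ∘ₗ V.subtype ∘ₗ e.symm.toLinearMap
  have hadj : adjoint M = e.toLinearMap ∘ₗ V.orthogonalProjectionOnto.toLinearMap ∘ₗ Φ := by
    rw [adjoint_comp_subtype_comp_symm, adjoint_adjoint]
  have hM : ∀ x, ‖adjoint M (J (M x))‖ = ‖x‖ := fun x ↦ by
    have hx : J (e.symm x) ∈ V := hV _ (e.symm x).2
    rw [hadj]
    simp only [M, comp_apply, LinearEquiv.coe_coe, LinearIsometryEquiv.coe_toLinearEquiv,
      ContinuousLinearMap.coe_coe, Submodule.subtype_apply]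
    rw [show Φ (J _) = J _ from LinearMap.congr_fun hΦ _, LinearIsometryEquiv.norm_map,
      Submodule.coe_norm, ← Submodule.starProjection_apply,
      Submodule.starProjection_eq_self_iff.2 hx, hJ, Submodule.norm_coe,
      LinearIsometryEquiv.norm_map]
  have hrange : range M = V.map (adjoint Φ) := by
    rw [range_comp, range_comp, LinearEquiv.range, Submodule.map_top, Submodule.range_subtype]
  rw [← hrange, ← addHaar_image_adjoint_ball_eq_iff μ hJ hM hR, hadj, coe_comp, coe_comp,
    Set.image_comp, Set.image_comp]
  rfl

end LinearMap

noncomputable def complexStructure (n : ℕ) : Module.End ℝ (EuclideanSpace ℂ (Fin n)) :=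
  DistribSMul.toLinearMap ℝ _ Complex.I

@[simp]
theorem complexStructure_apply {n : ℕ} (u : EuclideanSpace ℂ (Fin n)) :
    complexStructure n u = Complex.I • u :=
  rfl

theorem complexStructure_mul_self (n : ℕ) : complexStructure n * complexStructure n = -1 := by
  ext1 u
  simp [smul_smul]

theorem norm_complexStructure_apply {n : ℕ} (u : EuclideanSpace ℂ (Fin n)) :
    ‖complexStructure n u‖ = ‖u‖ := by
  simp [norm_smul]

theorem EuclideanSpace.real_inner_eq_re_inner {ι : Type*} [Fintype ι] (u v : EuclideanSpace ℂ ι) :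
    inner ℝ u v = (inner ℂ u v).re := by
  simp [PiLp.inner_apply, Complex.re_sum]

theorem real_inner_complexStructure_left {n : ℕ} (u v : EuclideanSpace ℂ (Fin n)) :
    inner ℝ (complexStructure n u) v = stdSymp n u v := by
  rw [complexStructure_apply, EuclideanSpace.real_inner_eq_re_inner]
  simp [stdSymp]

theorem adjoint_mul_complexStructure_mul_self {n : ℕ}
    {Φ : Module.End ℝ (EuclideanSpace ℂ (Fin n))}
    (hΦ : ∀ u v, stdSymp n (Φ u) (Φ v) = stdSymp n u v) :
    LinearMap.adjoint Φ * complexStructure n * Φ = complexStructure n := by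
  ext1 u
  refine ext_inner_right ℝ fun v ↦ ?_
  rw [Module.End.mul_apply, Module.End.mul_apply, LinearMap.adjoint_inner_left,
    real_inner_complexStructure_left, real_inner_complexStructure_left, hΦ]

theorem stmt6_general (n k : ℕ)
    (Φ : EuclideanSpace ℂ (Fin n) ≃ₗ[ℝ] EuclideanSpace ℂ (Fin n))
    (hΦ : ∀ u v, stdSymp n (Φ u) (Φ v) = stdSymp n u v)
    (V : Submodule ℝ (EuclideanSpace ℂ (Fin n)))
    (hVc : ∀ v ∈ V, Complex.I • v ∈ V)
    (R : ℝ) (hR : 0 < R)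
    (e : V ≃ₗᵢ[ℝ] EuclideanSpace ℝ (Fin (2 * k))) :
    volume (e '' (V.orthogonalProjection '' (Φ '' Metric.ball 0 R))) =
        volume (Metric.ball (0 : EuclideanSpace ℝ (Fin (2 * k))) R) ↔
      ∀ v ∈ Submodule.map (LinearMap.adjoint Φ.toLinearMap) V,
        Complex.I • v ∈ Submodule.map (LinearMap.adjoint Φ.toLinearMap) V :=
  LinearMap.addHaar_image_orthogonalProjectionOnto_image_ball_eq_iff volume
    norm_complexStructure_apply
    (mul_mul_eq_of_mul_mul_eq (complexStructure_mul_self n)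
      (adjoint_mul_complexStructure_mul_self hΦ))
    hVc e hR

/-- equality case of linear nonsqueezing: in the setting of the linear
middle-dimensional nonsqueezing theorem, `vol_{2k}(P Φ(B^{2n}(R))) = ω_{2k} R^{2k}` holds if
and only if the subspace `Φ* V` (Euclidean adjoint) is a complex subspace of `ℝ²ⁿ ≅ ℂⁿ`. -/
theorem stmt6 (n k : ℕ) (hk : 1 ≤ k) (hkn : k ≤ n)
    (Φ : EuclideanSpace ℂ (Fin n) ≃ₗ[ℝ] EuclideanSpace ℂ (Fin n))
    (hΦ : ∀ u v, stdSymp n (Φ u) (Φ v) = stdSymp n u v)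
    (V : Submodule ℝ (EuclideanSpace ℂ (Fin n)))
    (hVc : ∀ v ∈ V, Complex.I • v ∈ V)
    (hVdim : Module.finrank ℝ V = 2 * k)
    (R : ℝ) (hR : 0 < R)
    (e : V ≃ₗᵢ[ℝ] EuclideanSpace ℝ (Fin (2 * k))) :
    volume (e '' (V.orthogonalProjection '' (Φ '' Metric.ball 0 R))) =
        volume (Metric.ball (0 : EuclideanSpace ℝ (Fin (2 * k))) R) ↔
      ∀ v ∈ Submodule.map (LinearMap.adjoint Φ.toLinearMap) V,
        Complex.I • v ∈ Submodule.map (LinearMap.adjoint Φ.toLinearMap) V :=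
  stmt6_general n k Φ hΦ V hVc R hR e
end
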